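/- Let V be a normal supervisor on the plant G, let the attack constraint be normal (Σ_{c,A} ⊆ Σ_{o,A}), and suppose AP_dmg ≠ ∅. Then L(V_{A^sup}/G) = L(V/G) ∪ ⋃_{(s,σ)∈AP_dmg} En(s, σ). -/

import Mathlib

/-
An attacked run can leave `L(V/G)` only by an event `σ` that `A^sup` enables beyond `V`, i.e. one
of `I(P̂(P_o(u)))`, so the first exit is a string `u σ` of some `En(s, σ)`. Such a string cannot
be continued: its supervisor observation `P_o(u) σ` is not observed along `L(V/G)`. Otherwise
(`σ` being observable) some `u₁ σ ∈ L(V/G)` has `P_o(u₁) = P_o(u)`, hence the same attacker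
observation as `s`, and the attack pair property puts `u₁ σ` in `L_dmg`, which is disjoint
from `L(V/G)`.
-/

open scoped Classical

namespace ActuatorAttack

variable {A : Type*}

/-- Natural projection onto a sub-alphabet `S`: erase the letters not in `S`. -/
noncomputable def proj (S : Set A) (l : List A) : List A :=
  l.filter (fun a => decide (a ∈ S))

/-- The least language containing `ε` and closed under appending an event `σ`
allowed by `allow` at `s`, provided the result lies in the plant language `LG`. -/
inductive Lang (LG : Set (List A)) (allow : List A → Set A) : List A → Prop
  | nil : Lang LG allow []
  | snoc {s : List A} {σ : A} : Lang LG allow s → σ ∈ allow s →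
      (s ++ [σ]) ∈ LG → Lang LG allow (s ++ [σ])

/-- The closed-loop language `L(V/G)`. -/
def LVG (LG : Set (List A)) (So : Set A) (V : List A → Set A) :
    Set (List A) :=
  {s | Lang LG (fun t => V (proj So t)) s}

/-- Auxiliary function for the attacker-observation map: `pre` is the prefix
of the supervisor observation sequence already processed. -/
noncomputable def phatAux (V : List A → Set A) (SoA : Set A) :
    List A → List A → List (List A × Set A)
  | _, [] => []
  | pre, σ :: rest =>
      (proj SoA [σ], V (pre ++ [σ])) :: phatAux V SoA (pre ++ [σ]) rest

/-- The attacker-observation map `P̂`: the i-th letter of `P̂(σ₁⋯σₙ)` is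
`(P_{o,A}(σᵢ), V(σ₁⋯σᵢ))`. -/
noncomputable def phat (V : List A → Set A) (SoA : Set A) (w : List A) :
    List (List A × Set A) :=
  phatAux V SoA [] w

/-- The attacked supervisor `V_A`. -/
noncomputable def VA (V : List A → Set A) (ScA SoA : Set A)
    (Att : List (List A × Set A) → Set A) (w : List A) : Set A :=
  (V w \ ScA) ∪ Att (phat V SoA w)

/-- The attacked closed-loop language `L(V_A/G)`. -/
def LVAG (LG : Set (List A)) (So : Set A) (V : List A → Set A)
    (ScA SoA : Set A) (Att : List (List A × Set A) → Set A) : Set (List A) :=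
  {s | Lang LG (fun t =>
      {σ | proj So t ∈ proj So '' LVG LG So V ∧
           σ ∈ VA V ScA SoA Att (proj So t)}) s}

/-- An attacker is enabling if it enables every attackable event enabled by
the supervisor. -/
def Enabling (LG : Set (List A)) (So : Set A) (V : List A → Set A)
    (ScA SoA : Set A) (Att : List (List A × Set A) → Set A) : Prop :=
  ∀ w ∈ proj So '' LVG LG So V, V w ∩ ScA ⊆ Att (phat V SoA w)

/-- An attacker is successful if the attacked closed-loop language meets the
damage set, and everything outside `P_o⁻¹(P_o(L(V/G)))` lies in `L_dmg·Σ*`. -/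
def Successful (LG : Set (List A)) (So : Set A) (V : List A → Set A)
    (ScA SoA : Set A) (Att : List (List A × Set A) → Set A)
    (Ldmg : Set (List A)) : Prop :=
  (LVAG LG So V ScA SoA Att ∩ Ldmg).Nonempty ∧
  LVAG LG So V ScA SoA Att \ (proj So ⁻¹' (proj So '' LVG LG So V)) ⊆
    {t | ∃ d ∈ Ldmg, d <+: t}

/-- `(s, σ)` is an attack pair. -/
def AttackPair (LG : Set (List A)) (So : Set A) (V : List A → Set A)
    (ScA SoA : Set A) (Ldmg : Set (List A)) (s : List A) (σ : A) : Prop :=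
  s ∈ LVG LG So V ∧ σ ∈ ScA ∧ s ++ [σ] ∈ Ldmg ∧
  ∀ s' ∈ LVG LG So V,
    phat V SoA (proj So s) = phat V SoA (proj So s') →
    s' ++ [σ] ∈ LG → s' ++ [σ] ∈ Ldmg

/-- `En(s, σ)`: one-step `σ`-extensions in `L(G)` of strings of `L(V/G)` that
are attacker-observation equivalent to `s`. -/
def En (LG : Set (List A)) (So : Set A) (V : List A → Set A)
    (SoA : Set A) (s : List A) (σ : A) : Set (List A) :=
  {t | ∃ s' ∈ LVG LG So V, t = s' ++ [σ] ∧ t ∈ LG ∧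
       phat V SoA (proj So s) = phat V SoA (proj So s')}

/-- `I(ŵ)`: attackable events `σ` such that some string `s'` of `L(V/G)` with
attacker observation `ŵ` forms an attack pair `(s', σ)`. -/
def ISet (LG : Set (List A)) (So : Set A) (V : List A → Set A)
    (ScA SoA : Set A) (Ldmg : Set (List A))
    (w : List (List A × Set A)) : Set A :=
  {σ | σ ∈ ScA ∧ ∃ s' ∈ LVG LG So V,
        phat V SoA (proj So s') = w ∧ AttackPair LG So V ScA SoA Ldmg s' σ}

/-- The supremal attacker `A^sup`. -/
def Asup (LG : Set (List A)) (So : Set A) (V : List A → Set A)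
    (ScA SoA : Set A) (Ldmg : Set (List A))
    (w : List (List A × Set A)) : Set A :=
  {σ | ∃ s ∈ LVG LG So V, phat V SoA (proj So s) = w ∧
        σ ∈ V (proj So s) ∩ ScA} ∪
  ISet LG So V ScA SoA Ldmg w

theorem Lang.of_isPrefix {LG : Set (List A)} {allow : List A → Set A} {s t : List A}
    (ht : Lang LG allow t) (hst : s <+: t) : Lang LG allow s := by
  induction ht generalizing s with
  | nil => rw [List.prefix_nil.mp hst]; exact Lang.nil
  | snoc hu hσ hLG ih =>
    rcases List.prefix_concat_iff.mp hst with rfl | h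
    · exact Lang.snoc hu hσ hLG
    · exact ih h

theorem Lang.snoc_mem {LG : Set (List A)} {allow : List A → Set A} {s : List A} {σ : A}
    (h : Lang LG allow (s ++ [σ])) : s ++ [σ] ∈ LG := by
  generalize ht : s ++ [σ] = t at h
  cases h with
  | nil => simp at ht
  | snoc _ _ hLG => exact hLG

theorem proj_append_singleton_of_mem {S : Set A} {σ : A} (hσ : σ ∈ S) (l : List A) :
    proj S (l ++ [σ]) = proj S l ++ [σ] := by
  simp [proj, List.filter_append, hσ]

theorem proj_append_singleton_of_notMem {S : Set A} {σ : A} (hσ : σ ∉ S) (l : List A) :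
    proj S (l ++ [σ]) = proj S l := by
  simp [proj, List.filter_append, hσ]

theorem exists_prefix_of_proj_eq_append_singleton {S : Set A} {σ : A} {u x : List A}
    (h : proj S u = x ++ [σ]) : ∃ u₁, u₁ ++ [σ] <+: u ∧ proj S u₁ = x := by
  induction u using List.reverseRecOn with
  | nil => simp [proj] at h
  | append_singleton u a ih =>
    by_cases ha : a ∈ S
    · rw [proj_append_singleton_of_mem ha] at h
      obtain ⟨hu, hσa⟩ := List.append_inj' h rfl
      rw [List.singleton_inj] at hσa
      exact ⟨u, hσa ▸ List.prefix_refl _, hu⟩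
    · rw [proj_append_singleton_of_notMem ha] at h
      obtain ⟨u₁, hpre, hu₁⟩ := ih h
      exact ⟨u₁, hpre.trans (List.prefix_append u [a]), hu₁⟩

section AttackerObservation

variable {V : List A → Set A} {SoA : Set A}

theorem phatAux_append_singleton (pre w : List A) (σ : A) :
    phatAux V SoA pre (w ++ [σ]) =
      phatAux V SoA pre w ++ [(proj SoA [σ], V (pre ++ w ++ [σ]))] := by
  induction w generalizing pre with
  | nil => simp [phatAux]
  | cons a w ih => simp [phatAux, ih]

theorem phat_append_singleton (w : List A) (σ : A) :
    phat V SoA (w ++ [σ]) = phat V SoA w ++ [(proj SoA [σ], V (w ++ [σ]))] := by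
  simp [phat, phatAux_append_singleton]

theorem phat_eq_nil_iff {w : List A} : phat V SoA w = [] ↔ w = [] := by
  rcases List.eq_nil_or_concat' w with rfl | ⟨w, σ, rfl⟩
  · simp [phat, phatAux]
  · simp [phat_append_singleton]

theorem V_eq_of_phat_eq {w₁ w₂ : List A} (h : phat V SoA w₁ = phat V SoA w₂) :
    V w₁ = V w₂ := by
  rcases List.eq_nil_or_concat' w₁ with rfl | ⟨w₁, σ₁, rfl⟩
  · rw [phat_eq_nil_iff.mp (h.symm.trans (phat_eq_nil_iff.mpr rfl))]
  rcases List.eq_nil_or_concat' w₂ with rfl | ⟨w₂, σ₂, rfl⟩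
  · exact absurd (phat_eq_nil_iff.mp h) (by simp)
  rw [phat_append_singleton, phat_append_singleton] at h
  have hlast := (List.append_inj' h rfl).2
  simp only [List.singleton_inj, Prod.mk.injEq] at hlast
  exact hlast.2

end AttackerObservation

section SupremalAttacker

variable {LG : Set (List A)} {So ScA SoA : Set A} {V : List A → Set A} {Ldmg : Set (List A)}

theorem LVG_subset_LVAG_of_enabling {Att : List (List A × Set A) → Set A}
    (hAtt : Enabling LG So V ScA SoA Att) : LVG LG So V ⊆ LVAG LG So V ScA SoA Att := by
  intro t ht
  induction ht with
  | nil => exact Lang.nil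
  | @snoc s σ hs hσ hLG ih =>
    refine Lang.snoc ih ⟨⟨s, hs, rfl⟩, ?_⟩ hLG
    by_cases hσA : σ ∈ ScA
    · exact Or.inr (hAtt _ ⟨s, hs, rfl⟩ ⟨hσ, hσA⟩)
    · exact Or.inl ⟨hσ, hσA⟩

theorem enabling_Asup : Enabling LG So V ScA SoA (Asup LG So V ScA SoA Ldmg) := by
  rintro _ ⟨s, hs, rfl⟩ σ hσ
  exact Or.inl ⟨s, hs, rfl, hσ⟩

theorem En_subset_LVAG_Asup {s : List A} {σ : A} (hp : AttackPair LG So V ScA SoA Ldmg s σ) :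
    En LG So V SoA s σ ⊆ LVAG LG So V ScA SoA (Asup LG So V ScA SoA Ldmg) := by
  rintro _ ⟨s', hs', rfl, hLG, hobs⟩
  exact Lang.snoc (LVG_subset_LVAG_of_enabling enabling_Asup hs')
    ⟨⟨s', hs', rfl⟩, Or.inr (Or.inr ⟨hp.2.1, s, hp.1, hobs, hp⟩)⟩ hLG

theorem snoc_mem_LVG_or_En_of_mem_VA_Asup {u : List A} {σ : A} (hu : u ∈ LVG LG So V)
    (hσ : σ ∈ VA V ScA SoA (Asup LG So V ScA SoA Ldmg) (proj So u)) (hLG : u ++ [σ] ∈ LG) :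
    u ++ [σ] ∈ LVG LG So V ∨
      ∃ s, AttackPair LG So V ScA SoA Ldmg s σ ∧ u ++ [σ] ∈ En LG So V SoA s σ := by
  rcases hσ with ⟨hσV, -⟩ | ⟨s, -, hobs, hσV, -⟩ | ⟨-, s, -, hobs, hp⟩
  · exact Or.inl (Lang.snoc hu hσV hLG)
  · exact Or.inl (Lang.snoc hu (V_eq_of_phat_eq hobs ▸ hσV) hLG)
  · exact Or.inr ⟨s, hp, u, hu, rfl, hLG, hobs⟩

theorem proj_En_notMem_proj_LVG (hLdV : Ldmg ∩ LVG LG So V = ∅) {s t : List A} {σ : A}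
    (hp : AttackPair LG So V ScA SoA Ldmg s σ) (hσ : σ ∈ So) (ht : t ∈ En LG So V SoA s σ) :
    proj So t ∉ proj So '' LVG LG So V := by
  rintro ⟨v, hv, hvt⟩
  obtain ⟨u, hu, rfl, -, hobs⟩ := ht
  rw [proj_append_singleton_of_mem hσ] at hvt
  obtain ⟨u₁, hpre, hproj⟩ := exists_prefix_of_proj_eq_append_singleton hvt
  have hu₁σ : u₁ ++ [σ] ∈ LVG LG So V := Lang.of_isPrefix hv hpre
  have hu₁ : u₁ ∈ LVG LG So V := Lang.of_isPrefix hu₁σ (List.prefix_append u₁ [σ])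
  have hdmg : u₁ ++ [σ] ∈ Ldmg := hp.2.2.2 u₁ hu₁ (hproj ▸ hobs) (Lang.snoc_mem hu₁σ)
  exact (Set.eq_empty_iff_forall_notMem.mp hLdV) _ ⟨hdmg, hu₁σ⟩

theorem LVAG_Asup_subset (hnormV : ScA ⊆ So) (hLdV : Ldmg ∩ LVG LG So V = ∅) :
    LVAG LG So V ScA SoA (Asup LG So V ScA SoA Ldmg) ⊆
      LVG LG So V ∪
        ⋃ p ∈ {p : List A × A | AttackPair LG So V ScA SoA Ldmg p.1 p.2},
          En LG So V SoA p.1 p.2 := by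
  intro t ht
  induction ht with
  | nil => exact Or.inl Lang.nil
  | @snoc u σ hu hσ hLG ih =>
    obtain ⟨hobs, hσVA⟩ := hσ
    rcases ih with huL | huEn
    · rcases snoc_mem_LVG_or_En_of_mem_VA_Asup huL hσVA hLG with h | ⟨s, hp, hEn⟩
      · exact Or.inl h
      · exact Or.inr (Set.mem_biUnion (x := (s, σ)) hp hEn)
    · obtain ⟨p, hp, hEn⟩ := Set.mem_iUnion₂.mp huEn
      exact absurd hobs (proj_En_notMem_proj_LVG hLdV hp (hnormV hp.2.1) hEn)

end SupremalAttacker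

theorem stmt_14_general {A : Type*} (So Sc : Set A) (LG : Set (List A))
    (V : List A → Set A)
    (hnormV : Sc ⊆ So)
    (ScA SoA : Set A) (hcA : ScA ⊆ Sc)
    (Ldmg : Set (List A))
    (hLdV : Ldmg ∩ LVG LG So V = ∅) :
    LVAG LG So V ScA SoA (Asup LG So V ScA SoA Ldmg) =
      LVG LG So V ∪
        ⋃ p ∈ {p : List A × A | AttackPair LG So V ScA SoA Ldmg p.1 p.2},
          En LG So V SoA p.1 p.2 :=
  (LVAG_Asup_subset (hcA.trans hnormV) hLdV).antisymm <|
    Set.union_subset (LVG_subset_LVAG_of_enabling enabling_Asup)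
      (Set.iUnion₂_subset fun _ hp => En_subset_LVAG_Asup hp)

/-- If `AP_dmg ≠ ∅`, then
`L(V_{A^sup}/G) = L(V/G) ∪ ⋃_{(s,σ)∈AP_dmg} En(s,σ)`. -/
theorem stmt_14 {A : Type*} [Fintype A] (So Sc : Set A) (LG : Set (List A))
    (hnil : [] ∈ LG) (hpref : ∀ s t : List A, s <+: t → t ∈ LG → s ∈ LG)
    (V : List A → Set A) (hV : ∀ w, Scᶜ ⊆ V w)
    (hnormV : Sc ⊆ So)
    (ScA SoA : Set A) (hcA : ScA ⊆ Sc) (hoA : SoA ⊆ So)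
    (hnormA : ScA ⊆ SoA)
    (Ldmg : Set (List A)) (hLd : Ldmg ⊆ LG)
    (hLdV : Ldmg ∩ LVG LG So V = ∅)
    (hAP : ∃ s σ, AttackPair LG So V ScA SoA Ldmg s σ) :
    LVAG LG So V ScA SoA (Asup LG So V ScA SoA Ldmg) =
      LVG LG So V ∪
        ⋃ p ∈ {p : List A × A | AttackPair LG So V ScA SoA Ldmg p.1 p.2},
          En LG So V SoA p.1 p.2 :=
  stmt_14_general So Sc LG V hnormV ScA SoA hcA Ldmg hLdV

end ActuatorAttack
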